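/- arXiv:1803.09663 — 5 statements merged into one kernel-verified Lean document; each statement's English description precedes it below -/
import Mathlib

section
/- Let X_1,…,X_n be independent integer-valued random variables. Suppose that for every subset A ⊆ {1,…,n} and every bounded measurable function f : ℝ^{|A|} → ℝ that is nondecreasing in each coordinate, the map s ↦ E[f(X_i, i ∈ A) | Σ_{i∈A} X_i = s] is nondecreasing on the set of integers s with P(Σ_{i∈A} X_i = s) > 0. Then for every integer s with P(Σ_{i=1}^n X_i = s) > 0, the conditional distribution of (X_1,…,X_n) given Σ_{i=1}^n X_i = s is negatively associated (NA). -/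
/-!
Fix `A` and write `T = ∑_{i ∈ A} X_i`, `R = ∑_{i ∉ A} X_i`. The blocks `(X_i)_{i ∈ A}` and
`(X_i)_{i ∉ A}` are independent, so on the event `T = t` inside `T + R = s` they stay independent,
with the laws they have given `T = t` and given `R = s - t`. Hence, under the conditional law given
`T + R = s`, the conditional expectations of `f` and `g` given `T` are `φ(T)` and `ψ(s - T)`, where
`φ(t) = E[f | T = t]` and `ψ(r) = E[g | R = r]`, and that of `f g` is their product. By hypothesis
`φ` is nondecreasing and `t ↦ ψ(s - t)` nonincreasing on the support of `T`, so Chebyshev's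
covariance inequality for oppositely ordered functions of `T` gives `Cov(f, g) ≤ 0`.
-/

open MeasureTheory ProbabilityTheory

/-- `f` depends only on the coordinates in `A`. -/
def DepOn {n : ℕ} (f : (Fin n → ℝ) → ℝ) (A : Set (Fin n)) : Prop :=
  ∀ x y : Fin n → ℝ, (∀ i ∈ A, x i = y i) → f x = f y

/-- `f` is bounded. -/
def IsBdd {α : Type*} (f : α → ℝ) : Prop :=
  ∃ C : ℝ, ∀ x, |f x| ≤ C

/-- A random vector `X = (X_1, …, X_n)` (under the measure `μ`) is negatively associated:
for every index set `A` and all bounded measurable functions `f, g`, nondecreasing in each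
coordinate, depending only on the coordinates in `A` resp. `Aᶜ`, `Cov (f(X), g(X)) ≤ 0`. -/
def IsNA {Ω : Type*} [MeasurableSpace Ω] (μ : Measure Ω) {n : ℕ}
    (X : Ω → Fin n → ℝ) : Prop :=
  ∀ (A : Set (Fin n)) (f g : (Fin n → ℝ) → ℝ),
    Measurable f → Measurable g → Monotone f → Monotone g → IsBdd f → IsBdd g →
    DepOn f A → DepOn g Aᶜ →
    ∫ ω, f (X ω) * g (X ω) ∂μ ≤ (∫ ω, f (X ω) ∂μ) * ∫ ω, g (X ω) ∂μ

section
variable {Ω : Type*}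

lemma IsBdd.mul {f g : Ω → ℝ} (hf : IsBdd f) (hg : IsBdd g) : IsBdd fun x => f x * g x := by
  obtain ⟨C, hC⟩ := hf
  obtain ⟨D, hD⟩ := hg
  exact ⟨C * D, fun x => by
    rw [abs_mul]
    exact mul_le_mul (hC x) (hD x) (abs_nonneg _) ((abs_nonneg _).trans (hC x))⟩

lemma IsBdd.comp {α : Type*} {f : α → ℝ} (hf : IsBdd f) (T : Ω → α) : IsBdd fun x => f (T x) :=
  let ⟨C, hC⟩ := hf; ⟨C, fun x => hC (T x)⟩

lemma measurable_comap_of_factorsThrough {α β : Type*} [MeasurableSpace α] [Countable α]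
    [MeasurableSingletonClass α] [MeasurableSpace β] {U : Ω → α} {h : Ω → β}
    (hh : h.FactorsThrough U) : Measurable[MeasurableSpace.comap U ‹_›] h := by
  intro S _
  refine ⟨U '' (h ⁻¹' S), (Set.to_countable _).measurableSet, ?_⟩
  ext ω
  constructor
  · rintro ⟨ω', hω', hU⟩
    exact Set.mem_preimage.2 ((hh hU).symm ▸ hω')
  · exact fun hω => ⟨ω, hω, rfl⟩

lemma measurable_comap_of_eq_on_coords {ι β : Type*} [MeasurableSpace β] {X : ι → Ω → ℤ}
    {B : Finset ι} {h : Ω → β} (hh : ∀ ω ω', (∀ i ∈ B, X i ω = X i ω') → h ω = h ω') :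
    Measurable[MeasurableSpace.comap (fun ω (i : B) => X i ω) inferInstance] h :=
  measurable_comap_of_factorsThrough fun ω ω' hU => hh ω ω' fun i hi => congrFun hU ⟨i, hi⟩

variable [MeasurableSpace Ω]

lemma IsBdd.integrable {μ : Measure Ω} [IsFiniteMeasure μ] {f : Ω → ℝ} (hf : IsBdd f)
    (hm : Measurable f) : Integrable f μ :=
  let ⟨C, hC⟩ := hf; .of_bound hm.aestronglyMeasurable C (.of_forall hC)

lemma IsBdd.integral {ι : Type*} {κ : ι → Measure Ω} [∀ i, IsZeroOrProbabilityMeasure (κ i)]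
    {f : Ω → ℝ} (hf : IsBdd f) : IsBdd fun i => ∫ ω, f ω ∂(κ i) := by
  obtain ⟨C, hC⟩ := hf
  refine ⟨|C|, fun i => ?_⟩
  calc ‖∫ ω, f ω ∂(κ i)‖ ≤ |C| * (κ i).real Set.univ :=
        norm_integral_le_of_norm_le_const (.of_forall fun ω => (hC ω).trans (le_abs_self C))
    _ ≤ |C| := mul_le_of_le_one_right (abs_nonneg C) measureReal_le_one

lemma setIntegral_eq_measureReal_mul_integral_cond {μ : Measure Ω} [IsFiniteMeasure μ]
    (B : Set Ω) (h : Ω → ℝ) : ∫ ω in B, h ω ∂μ = μ.real B * ∫ ω, h ω ∂μ[|B] := by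
  rw [ProbabilityTheory.cond, integral_smul_measure, smul_eq_mul, ← mul_assoc, measureReal_def,
    ← ENNReal.toReal_mul]
  by_cases hB : μ B = 0
  · simp [Measure.restrict_eq_zero.2 hB]
  · rw [ENNReal.mul_inv_cancel hB (measure_ne_top μ B), ENNReal.toReal_one, one_mul]

lemma ae_measure_fiber_ne_zero {ι : Type*} [MeasurableSpace ι] [Countable ι]
    [MeasurableSingletonClass ι] {ν : Measure Ω} {T : Ω → ι} (hT : Measurable T) :
    ∀ᵐ ω ∂ν, ν {ω' | T ω' = T ω} ≠ 0 := by
  have h : ∀ᵐ t ∂ν.map T, ν.map T {t} ≠ 0 := ae_iff_of_countable.2 fun _ h => h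
  filter_upwards [ae_of_ae_map hT.aemeasurable h] with ω hω
  rwa [Measure.map_apply hT (measurableSet_singleton _)] at hω

lemma integral_eq_integral_comp_of_setIntegral_fiber {ι : Type*} [MeasurableSpace ι]
    [Countable ι] [MeasurableSingletonClass ι] {ν : Measure Ω} {T : Ω → ι} (hT : Measurable T)
    {h : Ω → ℝ} {c : ι → ℝ} (hh : Integrable h ν) (hc : Integrable (fun ω => c (T ω)) ν)
    (hfiber : ∀ t, ∫ ω in T ⁻¹' {t}, h ω ∂ν = c t * ν.real (T ⁻¹' {t})) :
    ∫ ω, h ω ∂ν = ∫ ω, c (T ω) ∂ν := by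
  have hsum : ∀ k : Ω → ℝ, Integrable k ν →
      ∫ ω, k ω ∂ν = ∑' t, ∫ ω in T ⁻¹' {t}, k ω ∂ν := fun k hk => by
    have hU : ⋃ t, T ⁻¹' {t} = Set.univ := by
      rw [← Set.preimage_iUnion, Set.iUnion_of_singleton, Set.preimage_univ]
    have h := integral_iUnion (fun t => hT (measurableSet_singleton t))
      (fun t t' htt' => Set.disjoint_left.2 fun ω h h' => htt' (h.symm.trans h'))
      (by rw [hU]; exact hk.integrableOn)
    rwa [hU, Measure.restrict_univ] at h
  rw [hsum h hh, hsum _ hc]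
  refine tsum_congr fun t => ?_
  rw [hfiber, setIntegral_congr_fun (hT (measurableSet_singleton t)) (g := fun _ => c t)
    fun ω hω => congrArg c hω, setIntegral_const, smul_eq_mul, mul_comm]

lemma integral_mul_le_of_ae_antivary {ν : Measure Ω} [IsProbabilityMeasure ν] {u v : Ω → ℝ}
    (hu : Integrable u ν) (hv : Integrable v ν) (huv : Integrable (fun ω => u ω * v ω) ν)
    (hanti : ∀ᵐ ω ∂ν, ∀ᵐ ω' ∂ν, (u ω - u ω') * (v ω - v ω') ≤ 0) :
    ∫ ω, u ω * v ω ∂ν ≤ (∫ ω, u ω ∂ν) * ∫ ω, v ω ∂ν := by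
  set a := ∫ ω, u ω ∂ν
  set b := ∫ ω, v ω ∂ν
  set c := ∫ ω, u ω * v ω ∂ν
  have hexpand : ∀ x y : ℝ, ∫ ω, (x - u ω) * (y - v ω) ∂ν = x * y - x * b - y * a + c := by
    intro x y
    have hsplit : (fun ω => (x - u ω) * (y - v ω)) =
        fun ω => (x * y - x * v ω) - (y * u ω - u ω * v ω) := by funext; ring
    rw [hsplit, integral_sub ((integrable_const _).sub' (hv.const_mul x))
      ((hu.const_mul y).sub' huv), integral_sub (integrable_const _) (hv.const_mul x),
      integral_sub (hu.const_mul y) huv, integral_const, integral_const_mul, integral_const_mul]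
    simp only [probReal_univ, one_smul, a, b, c]
    ring
  have hinner : ∀ᵐ ω ∂ν, u ω * v ω - u ω * b - v ω * a + c ≤ 0 := by
    filter_upwards [hanti] with ω hω
    rw [← hexpand]
    exact integral_nonpos_of_ae hω
  have houter : ∫ ω, (u ω * v ω - u ω * b - v ω * a + c) ∂ν = 2 * (c - a * b) := by
    rw [integral_add (((huv.sub' (hu.mul_const b))).sub' (hv.mul_const a)) (integrable_const c),
      integral_sub (huv.sub' (hu.mul_const b)) (hv.mul_const a), integral_sub huv (hu.mul_const b),
      integral_const, integral_mul_const, integral_mul_const]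
    simp only [probReal_univ, one_smul, a, b, c]
    ring
  linarith [integral_nonpos_of_ae hinner]

lemma integral_comp_mul_le_of_monotoneOn_antitoneOn {ι : Type*} [LinearOrder ι]
    [MeasurableSpace ι] [Countable ι] [MeasurableSingletonClass ι] {ν : Measure Ω}
    [IsProbabilityMeasure ν] {T : Ω → ι} (hT : Measurable T) {S : Set ι} (hS : ∀ᵐ ω ∂ν, T ω ∈ S)
    {φ χ : ι → ℝ} (hφ : IsBdd φ) (hχ : IsBdd χ) (hφS : MonotoneOn φ S) (hχS : AntitoneOn χ S) :
    ∫ ω, φ (T ω) * χ (T ω) ∂ν ≤ (∫ ω, φ (T ω) ∂ν) * ∫ ω, χ (T ω) ∂ν := by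
  have hint : ∀ {c : ι → ℝ}, IsBdd c → Integrable (fun ω => c (T ω)) ν :=
    fun hc => (hc.comp T).integrable (by fun_prop)
  refine integral_mul_le_of_ae_antivary (hint hφ) (hint hχ) (hint (hφ.mul hχ)) ?_
  filter_upwards [hS] with ω hω
  filter_upwards [hS] with ω' hω'
  rcases le_total (T ω) (T ω') with h | h
  · exact mul_nonpos_of_nonpos_of_nonneg (sub_nonpos.2 (hφS hω hω' h))
      (sub_nonneg.2 (hχS hω hω' h))
  · exact mul_nonpos_of_nonneg_of_nonpos (sub_nonneg.2 (hφS hω' hω h))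
      (sub_nonpos.2 (hχS hω' hω h))

end

namespace ProbabilityTheory.Indep

variable {Ω : Type*} {m₁ m₂ mΩ : MeasurableSpace Ω} {μ : Measure Ω}

lemma setIntegral_inter_mul (hind : Indep m₁ m₂ μ) (hm₁ : m₁ ≤ mΩ) (hm₂ : m₂ ≤ mΩ)
    {B C : Set Ω} {Φ Ψ : Ω → ℝ} (hB : MeasurableSet[m₁] B) (hC : MeasurableSet[m₂] C)
    (hΦ : Measurable[m₁] Φ) (hΨ : Measurable[m₂] Ψ) :
    ∫ ω in B ∩ C, Φ ω * Ψ ω ∂μ = (∫ ω in B, Φ ω ∂μ) * ∫ ω in C, Ψ ω ∂μ := by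
  have hBΦ : Measurable[m₁] (B.indicator Φ) := hΦ.indicator hB
  have hCΨ : Measurable[m₂] (C.indicator Ψ) := hΨ.indicator hC
  have hindep : IndepFun (B.indicator Φ) (C.indicator Ψ) μ := (IndepFun_iff_Indep _ _ _).2 <|
    indep_of_indep_of_le_right (indep_of_indep_of_le_left hind hBΦ.comap_le) hCΨ.comap_le
  rw [← integral_indicator ((hm₁ _ hB).inter (hm₂ _ hC)), ← integral_indicator (hm₁ _ hB),
    ← integral_indicator (hm₂ _ hC)]
  simp_rw [Set.inter_indicator_mul]
  exact hindep.integral_fun_mul_eq_mul_integral (hBΦ.mono hm₁ le_rfl).aestronglyMeasurable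
    (hCΨ.mono hm₂ le_rfl).aestronglyMeasurable

variable {T R : Ω → ℤ} {Φ Ψ : Ω → ℝ}

lemma _root_.setOf_add_eq_inter_setOf_eq (s t : ℤ) :
    {ω | T ω + R ω = s} ∩ {ω | T ω = t} = {ω | T ω = t} ∩ {ω | R ω = s - t} := by
  ext ω
  simp only [Set.mem_inter_iff, Set.mem_ofPred_eq]
  omega

lemma setIntegral_cond_add_eq (hind : Indep m₁ m₂ μ) (hm₁ : m₁ ≤ mΩ) (hm₂ : m₂ ≤ mΩ)
    (hT : Measurable[m₁] T) (hR : Measurable[m₂] R) (hΦ : Measurable[m₁] Φ)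
    (hΨ : Measurable[m₂] Ψ) (s t : ℤ) :
    ∫ ω in {ω | T ω = t}, Φ ω * Ψ ω ∂μ[|{ω | T ω + R ω = s}] =
      (μ {ω | T ω + R ω = s})⁻¹.toReal *
        ((∫ ω in {ω | T ω = t}, Φ ω ∂μ) * ∫ ω in {ω | R ω = s - t}, Ψ ω ∂μ) := by
  rw [cond, Measure.restrict_smul, integral_smul_measure, smul_eq_mul,
    Measure.restrict_restrict (s := {ω | T ω = t}) (hm₁ _ (hT (measurableSet_singleton t))),
    Set.inter_comm, setOf_add_eq_inter_setOf_eq]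
  exact congrArg _ (hind.setIntegral_inter_mul hm₁ hm₂ (hT (measurableSet_singleton t))
    (hR (measurableSet_singleton _)) hΦ hΨ)

lemma measureReal_cond_add_fiber [IsFiniteMeasure μ] (hind : Indep m₁ m₂ μ) (hm₁ : m₁ ≤ mΩ)
    (hm₂ : m₂ ≤ mΩ) (hT : Measurable[m₁] T) (hR : Measurable[m₂] R) (s t : ℤ) :
    (μ[|{ω | T ω + R ω = s}]).real {ω | T ω = t} = (μ {ω | T ω + R ω = s})⁻¹.toReal *
      (μ.real {ω | T ω = t} * μ.real {ω | R ω = s - t}) := by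
  simpa only [mul_one, setIntegral_const, smul_eq_mul] using
    hind.setIntegral_cond_add_eq (Φ := fun _ => 1) (Ψ := fun _ => 1) hm₁ hm₂ hT hR
      measurable_const measurable_const s t

lemma ae_cond_add_measure_fiber_pos [IsFiniteMeasure μ] (hind : Indep m₁ m₂ μ)
    (hm₁ : m₁ ≤ mΩ) (hm₂ : m₂ ≤ mΩ) (hT : Measurable[m₁] T) (hR : Measurable[m₂] R) (s : ℤ) :
    ∀ᵐ ω ∂μ[|{ω | T ω + R ω = s}],
      0 < μ {ω' | T ω' = T ω} ∧ 0 < μ {ω' | R ω' = s - T ω} := by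
  filter_upwards [ae_measure_fiber_ne_zero (hT.mono hm₁ le_rfl)] with ω hω
  rw [← measureReal_ne_zero_iff, measureReal_cond_add_fiber hind hm₁ hm₂ hT hR] at hω
  obtain ⟨hT0, hR0⟩ := mul_ne_zero_iff.1 (right_ne_zero_of_mul hω)
  exact ⟨pos_iff_ne_zero.2 ((measureReal_ne_zero_iff (measure_ne_top _ _)).1 hT0),
    pos_iff_ne_zero.2 ((measureReal_ne_zero_iff (measure_ne_top _ _)).1 hR0)⟩

theorem integral_mul_cond_add_le [IsFiniteMeasure μ] (hind : Indep m₁ m₂ μ) (hm₁ : m₁ ≤ mΩ)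
    (hm₂ : m₂ ≤ mΩ) (hT : Measurable[m₁] T) (hR : Measurable[m₂] R) (hΦ : Measurable[m₁] Φ)
    (hΨ : Measurable[m₂] Ψ) (hΦb : IsBdd Φ) (hΨb : IsBdd Ψ)
    (hΦmono : ∀ t t' : ℤ, t ≤ t' → 0 < μ {ω | T ω = t} → 0 < μ {ω | T ω = t'} →
      ∫ ω, Φ ω ∂μ[|{ω | T ω = t}] ≤ ∫ ω, Φ ω ∂μ[|{ω | T ω = t'}])
    (hΨmono : ∀ r r' : ℤ, r ≤ r' → 0 < μ {ω | R ω = r} → 0 < μ {ω | R ω = r'} →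
      ∫ ω, Ψ ω ∂μ[|{ω | R ω = r}] ≤ ∫ ω, Ψ ω ∂μ[|{ω | R ω = r'}]) (s : ℤ) :
    ∫ ω, Φ ω * Ψ ω ∂μ[|{ω | T ω + R ω = s}] ≤
      (∫ ω, Φ ω ∂μ[|{ω | T ω + R ω = s}]) * ∫ ω, Ψ ω ∂μ[|{ω | T ω + R ω = s}] := by
  set ν := μ[|{ω | T ω + R ω = s}]
  -- conditioning on a null event gives the zero measure
  rcases eq_zero_or_isProbabilityMeasure ν with hν | hν
  · simp [hν]
  set φ : ℤ → ℝ := fun t => ∫ ω, Φ ω ∂μ[|{ω | T ω = t}]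
  set ψ : ℤ → ℝ := fun r => ∫ ω, Ψ ω ∂μ[|{ω | R ω = r}]
  have hTm : Measurable T := hT.mono hm₁ le_rfl
  have hfiber := fun Φ' Ψ' : Ω → ℝ =>
    hind.setIntegral_cond_add_eq (Φ := Φ') (Ψ := Ψ') hm₁ hm₂ hT hR (s := s)
  have hνT := measureReal_cond_add_fiber hind hm₁ hm₂ hT hR s
  have hΦfib : ∀ t, ∫ ω in {ω | T ω = t}, Φ ω ∂ν = φ t * ν.real {ω | T ω = t} := fun t => by
    have h := hfiber Φ (fun _ => 1) hΦ measurable_const t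
    simp only [mul_one, setIntegral_const, smul_eq_mul] at h
    rw [h, hνT, setIntegral_eq_measureReal_mul_integral_cond]
    ring
  have hΨfib : ∀ t, ∫ ω in {ω | T ω = t}, Ψ ω ∂ν = ψ (s - t) * ν.real {ω | T ω = t} := by
    intro t
    have h := hfiber (fun _ => 1) Ψ measurable_const hΨ t
    simp only [one_mul, setIntegral_const, smul_eq_mul] at h
    rw [h, hνT, setIntegral_eq_measureReal_mul_integral_cond]
    ring
  have hΦΨfib : ∀ t, ∫ ω in {ω | T ω = t}, Φ ω * Ψ ω ∂ν =
      φ t * ψ (s - t) * ν.real {ω | T ω = t} := fun t => by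
    rw [hfiber Φ Ψ hΦ hΨ t, hνT, setIntegral_eq_measureReal_mul_integral_cond,
      setIntegral_eq_measureReal_mul_integral_cond]
    ring
  have hφb : IsBdd φ := hΦb.integral
  have hψb : IsBdd fun t => ψ (s - t) :=
    (hΨb.integral (κ := fun r => μ[|{ω | R ω = r}])).comp (s - ·)
  have hint : ∀ {c : ℤ → ℝ}, IsBdd c → Integrable (fun ω => c (T ω)) ν :=
    fun hc => (hc.comp T).integrable (by fun_prop)
  have hΦm : Measurable Φ := hΦ.mono hm₁ le_rfl
  have hΨm : Measurable Ψ := hΨ.mono hm₂ le_rfl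
  rw [integral_eq_integral_comp_of_setIntegral_fiber hTm
      ((hΦb.mul hΨb).integrable (hΦm.mul hΨm)) (hint (hφb.mul hψb)) hΦΨfib,
    integral_eq_integral_comp_of_setIntegral_fiber hTm (hΦb.integrable hΦm) (hint hφb) hΦfib,
    integral_eq_integral_comp_of_setIntegral_fiber hTm (hΨb.integrable hΨm) (hint hψb) hΨfib]
  exact integral_comp_mul_le_of_monotoneOn_antitoneOn hTm
    (S := {t | 0 < μ {ω | T ω = t} ∧ 0 < μ {ω | R ω = s - t}})
    (ae_cond_add_measure_fiber_pos hind hm₁ hm₂ hT hR s) hφb hψb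
    (fun t ht t' ht' htt' => hΦmono t t' htt' ht.1 ht'.1)
    (fun t ht t' ht' htt' => hΨmono _ _ (by omega) ht'.2 ht.2)

end ProbabilityTheory.Indep

/-- if `X_1, …, X_n` are independent integer-valued random variables such that
for every subset `A` and every bounded measurable function `f`, nondecreasing in each
coordinate and depending only on the coordinates in `A`, the conditional expectation
`E[f(X) | ∑_{i ∈ A} X_i = s]` is nondecreasing in `s` (over the integers `s` of positive
probability), then for every integer `s` with `P(∑ X_i = s) > 0` the conditional
distribution of `(X_1, …, X_n)` given `∑ X_i = s` is negatively associated. -/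
theorem stmt0 {Ω : Type*} [MeasurableSpace Ω] (μ : Measure Ω) [IsProbabilityMeasure μ]
    {n : ℕ} (X : Fin n → Ω → ℤ) (hX : ∀ i, Measurable (X i))
    (hindep : iIndepFun X μ)
    (hmono : ∀ (A : Finset (Fin n)) (f : (Fin n → ℝ) → ℝ),
      Measurable f → Monotone f → IsBdd f → DepOn f ↑A →
      ∀ s t : ℤ, s ≤ t →
        0 < μ {ω | (∑ i ∈ A, X i ω) = s} → 0 < μ {ω | (∑ i ∈ A, X i ω) = t} →
        ∫ ω, f (fun i => (X i ω : ℝ)) ∂(μ[|{ω | (∑ i ∈ A, X i ω) = s}]) ≤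
          ∫ ω, f (fun i => (X i ω : ℝ)) ∂(μ[|{ω | (∑ i ∈ A, X i ω) = t}])) :
    ∀ s : ℤ, 0 < μ {ω | (∑ i, X i ω) = s} →
      IsNA (μ[|{ω | (∑ i, X i ω) = s}]) (fun ω i => (X i ω : ℝ)) := by
  classical
  intro s _ A f g hf hg hfmono hgmono hfb hgb hfA hgA
  set B := A.toFinset
  have hBA : (B : Set (Fin n)) = A := Set.coe_toFinset A
  have hBcA : ((Bᶜ : Finset (Fin n)) : Set (Fin n)) = Aᶜ := by rw [Finset.coe_compl, hBA]
  have hU : ∀ C : Finset (Fin n), Measurable fun ω (i : C) => X i ω :=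
    fun C => measurable_pi_lambda _ fun i => hX i
  have hind := (IndepFun_iff_Indep _ _ _).1 (hindep.indepFun_finset B Bᶜ disjoint_compl_right hX)
  have hsplit : {ω | ∑ i, X i ω = s} = {ω | ∑ i ∈ B, X i ω + ∑ i ∈ Bᶜ, X i ω = s} := by
    simp_rw [Finset.sum_add_sum_compl]
  rw [hsplit]
  exact hind.integral_mul_cond_add_le (hU B).comap_le (hU Bᶜ).comap_le
    (measurable_comap_of_eq_on_coords fun ω ω' h => Finset.sum_congr rfl h)
    (measurable_comap_of_eq_on_coords fun ω ω' h => Finset.sum_congr rfl h)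
    (measurable_comap_of_eq_on_coords fun ω ω' h => hfA _ _ fun i hi => by
      rw [h i (Set.mem_toFinset.2 hi)])
    (measurable_comap_of_eq_on_coords fun ω ω' h => hgA _ _ fun i hi => by
      rw [h i (by simpa [B] using hi)])
    (hfb.comp _) (hgb.comp _) (hmono B f hf hfmono hfb (hBA ▸ hfA))
    (hmono Bᶜ g hg hgmono hgb (hBcA ▸ hgA)) s
end

section
/- Let (𝕏,𝒳) be a measurable space, F a probability measure on 𝕏, (X_i)_{i≥1} an i.i.d. sequence with distribution F, and let τ = U_1 + ⋯ + U_n, where U_1,…,U_n are independent {0,1}-valued (Bernoulli) random variables, with (U_1,…,U_n) independent of (X_i)_{i≥1}. Let η = Σ_{i=1}^τ δ_{X_i} be the associated mixed sampled point process. Then for every finite collection B_1,…,B_m ∈ 𝒳 of pairwise disjoint measurable sets, the random vector (η(B_1),…,η(B_m)) = (Σ_{i=1}^τ 1{X_i ∈ B_1},…, Σ_{i=1}^τ 1{X_i ∈ B_m}) is negatively associated (NA). -/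
open MeasureTheory ProbabilityTheory

open Finset Function

/-!
Discretize each sample to the cell of `B` containing it and each `U i` to the event `U i = 1`.
Given the Bernoulli outcomes, the first `τ` samples and the samples indexed by `{i | U i = 1}`
have the same joint law because the samples are i.i.d.; hence the count vector has the law of
`∑ i, U i • e (X i)`, where `e x` is the unit vector of the cell containing `x` (or `0`). This is
a sum of `n` independent trials, each moving at most one coordinate, so no trial moves both a
function of the coordinates in `A` and one of the coordinates in `Aᶜ`. By induction on `n`,
conditioning on the first trial reduces negative association to a covariance inequality for a
single trial.
-/

namespace DepOn

variable {m : ℕ} {f : (Fin m → ℝ) → ℝ} {A : Set (Fin m)}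

theorem apply_add_eq (hf : DepOn f A) {y : Fin m → ℝ} (hy : ∀ i ∈ A, y i = 0)
    (x : Fin m → ℝ) : f (y + x) = f x :=
  hf _ _ fun i hi => by simp [hy i hi]

theorem comp_add_left (hf : DepOn f A) (y : Fin m → ℝ) : DepOn (fun x => f (y + x)) A :=
  fun x x' hxx' => hf _ _ fun i hi => by simp [hxx' i hi]

end DepOn

theorem sum_mul_mul_le_of_mul_sub_eq_zero {O : Type*} [Fintype O] {w F G : O → ℝ} {F₀ G₀ : ℝ}
    (hw : ∀ o, 0 ≤ w o) (hw1 : ∑ o, w o = 1) (hF : ∀ o, F₀ ≤ F o) (hG : ∀ o, G₀ ≤ G o)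
    (hFG : ∀ o, (F o - F₀) * (G o - G₀) = 0) :
    ∑ o, w o * (F o * G o) ≤ (∑ o, w o * F o) * ∑ o, w o * G o := by
  have mean_ge {H : O → ℝ} {H₀ : ℝ} (hH : ∀ o, H₀ ≤ H o) : H₀ ≤ ∑ o, w o * H o :=
    calc H₀ = ∑ o, w o * H₀ := by rw [← sum_mul, hw1, one_mul]
      _ ≤ ∑ o, w o * H o := sum_le_sum fun o _ => mul_le_mul_of_nonneg_left (hH o) (hw o)
  have hpoint : ∀ o, w o * (F o * G o) = F₀ * (w o * G o) + G₀ * (w o * F o) - F₀ * G₀ * w o :=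
    fun o => by linear_combination w o * hFG o
  rw [sum_congr rfl fun o _ => hpoint o, sum_sub_distrib, sum_add_distrib, ← mul_sum, ← mul_sum,
    ← mul_sum, hw1]
  nlinarith [mul_nonneg (sub_nonneg.2 (mean_ge hF)) (sub_nonneg.2 (mean_ge hG))]

section PiWeightedSum

variable {O : Type*} [Fintype O] {n : ℕ}

def piWeightedSum (w : Fin n → O → ℝ) (h : (Fin n → O) → ℝ) : ℝ :=
  ∑ t, (∏ i, w i (t i)) * h t

theorem piWeightedSum_succ (w : Fin (n + 1) → O → ℝ) (h : (Fin (n + 1) → O) → ℝ) :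
    piWeightedSum w h =
      ∑ o, w 0 o * piWeightedSum (fun i => w i.succ) (fun t => h (Fin.cons o t)) := by
  simp only [piWeightedSum, mul_sum, ← (Fin.consEquiv fun _ => O).sum_comp,
    Fintype.sum_prod_type, Fin.prod_univ_succ, mul_assoc]
  rfl

theorem piWeightedSum_mono {w : Fin n → O → ℝ} (hw : ∀ i o, 0 ≤ w i o)
    {h h' : (Fin n → O) → ℝ} (hh : h ≤ h') : piWeightedSum w h ≤ piWeightedSum w h' :=
  sum_le_sum fun t _ => mul_le_mul_of_nonneg_left (hh t) (prod_nonneg fun i _ => hw i _)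

theorem piWeightedSum_prod {O' : Type*} [Fintype O'] (p : Fin n → O → ℝ) (q : Fin n → O' → ℝ)
    (h : (Fin n → O × O') → ℝ) :
    piWeightedSum (fun i o => p i o.1 * q i o.2) h =
      piWeightedSum p fun u => piWeightedSum q fun c => h fun i => (u i, c i) := by
  simp only [piWeightedSum, mul_sum, ← (Equiv.arrowProdEquivProdArrow _ _ _).symm.sum_comp,
    Fintype.sum_prod_type, prod_mul_distrib, mul_assoc]
  rfl

theorem piWeightedSum_comp_perm (q : O → ℝ) (σ : Equiv.Perm (Fin n)) (h : (Fin n → O) → ℝ) :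
    piWeightedSum (fun _ => q) (fun t => h (t ∘ σ)) = piWeightedSum (fun _ => q) h := by
  simp only [piWeightedSum]
  rw [← (σ.arrowCongr (Equiv.refl O)).sum_comp]
  refine sum_congr rfl fun t _ => ?_
  congr 1
  · exact Equiv.prod_comp σ.symm fun i => q (t i)
  · congr 1
    ext i
    simp

theorem piWeightedSum_sum_eq_of_card_eq {M : Type*} [AddCommMonoid M] (q : O → ℝ) (y : O → M)
    (H : M → ℝ) {s s' : Finset (Fin n)} (hss' : #s = #s') :
    piWeightedSum (fun _ => q) (fun t => H (∑ i ∈ s, y (t i))) =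
      piWeightedSum (fun _ => q) (fun t => H (∑ i ∈ s', y (t i))) := by
  obtain ⟨σ, rfl⟩ := Equiv.Perm.exists_map_finset_eq s s' hss'
  simp only [sum_map]
  exact (piWeightedSum_comp_perm q σ _).symm

theorem piWeightedSum_mul_le {m : ℕ} {z : O → Fin m → ℝ} (hz : ∀ o, 0 ≤ z o)
    (hz_single : ∀ o j j', z o j ≠ 0 → z o j' ≠ 0 → j = j') {A : Set (Fin m)}
    {w : Fin n → O → ℝ} (hw : ∀ i o, 0 ≤ w i o) (hw1 : ∀ i, ∑ o, w i o = 1)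
    {f g : (Fin m → ℝ) → ℝ} (hf : Monotone f) (hg : Monotone g) (hfA : DepOn f A)
    (hgA : DepOn g Aᶜ) :
    piWeightedSum w (fun t => f (∑ i, z (t i)) * g (∑ i, z (t i))) ≤
      piWeightedSum w (fun t => f (∑ i, z (t i))) *
        piWeightedSum w (fun t => g (∑ i, z (t i))) := by
  induction n generalizing f g with
  | zero => simp [piWeightedSum]
  | succ n ih =>
    set w' : Fin n → O → ℝ := fun i => w i.succ
    set S : (Fin n → O) → Fin m → ℝ := fun t => ∑ i, z (t i)
    have hsplit (h : (Fin m → ℝ) → ℝ) : piWeightedSum w (fun t => h (∑ i, z (t i))) =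
        ∑ o, w 0 o * piWeightedSum w' (fun t => h (z o + S t)) := by
      simp [piWeightedSum_succ, Fin.sum_univ_succ, w', S]
    have hdisj (o : O) : (∀ j ∈ A, z o j = 0) ∨ ∀ j ∈ Aᶜ, z o j = 0 := by
      by_contra! ⟨⟨j, hjA, hj⟩, ⟨j', hj'A, hj'⟩⟩
      exact hj'A (hz_single o j j' hj hj' ▸ hjA)
    rw [hsplit fun x => f x * g x, hsplit f, hsplit g]
    refine (sum_le_sum fun o _ => mul_le_mul_of_nonneg_left
      (ih (fun i => hw i.succ) (fun i => hw1 i.succ) (hf.comp (monotone_id.const_add (z o)))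
        (hg.comp (monotone_id.const_add (z o))) (hfA.comp_add_left (z o))
        (hgA.comp_add_left (z o))) (hw 0 o)).trans ?_
    refine sum_mul_mul_le_of_mul_sub_eq_zero (hw 0) (hw1 0)
      (fun o => piWeightedSum_mono (fun i => hw i.succ) fun t => hf (le_add_of_nonneg_left (hz o)))
      (fun o => piWeightedSum_mono (fun i => hw i.succ) fun t => hg (le_add_of_nonneg_left (hz o)))
      fun o => ?_
    rcases hdisj o with hA | hA
    · simp [hfA.apply_add_eq hA]
    · simp [hgA.apply_add_eq hA]

end PiWeightedSum

section Sampling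

variable {Ω 𝕏 α : Type*} [MeasurableSpace Ω] [MeasurableSpace 𝕏] [MeasurableSpace α]
  {μ : Measure Ω}

theorem integral_comp_eq_sum_measureReal_preimage [IsFiniteMeasure μ] {E : Type*} [Fintype E]
    {V : Ω → E} (hV : ∀ v, MeasurableSet (V ⁻¹' {v})) (h : E → ℝ) :
    ∫ ω, h (V ω) ∂μ = ∑ v, μ.real (V ⁻¹' {v}) * h v := by
  classical
  have hdec : (fun ω => h (V ω)) = fun ω => ∑ v, (V ⁻¹' {v}).indicator (fun _ => h v) ω := by
    ext ω
    simp [Set.indicator_apply]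
  rw [hdec, integral_finsetSum _ fun v _ => (integrable_const _).indicator (hV v)]
  simp [integral_indicator_const _ (hV _)]

theorem sum_measureReal_preimage_singleton_eq_one [IsProbabilityMeasure μ] {E : Type*}
    [Fintype E] {V : Ω → E} (hV : ∀ v, MeasurableSet (V ⁻¹' {v})) :
    ∑ v, μ.real (V ⁻¹' {v}) = 1 := by
  rw [sum_measureReal_preimage_singleton (μ := μ) univ fun v _ => hV v]
  simp

variable {F : Measure 𝕏} {n : ℕ} {U : Fin n → Ω → α} {X : ℕ → Ω → 𝕏}

theorem measure_iInter_preimage_inter_eq_prod (hXmeas : ∀ i, Measurable (X i))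
    (hXindep : iIndepFun X μ) (hXlaw : ∀ i, μ.map (X i) = F) (hUindep : iIndepFun U μ)
    (hUX : IndepFun (fun ω i => U i ω) (fun ω i => X i ω) μ)
    {S : Fin n → Set α} (hS : ∀ i, MeasurableSet (S i))
    {T : Fin n → Set 𝕏} (hT : ∀ i, MeasurableSet (T i)) :
    μ (⋂ i, U i ⁻¹' S i ∩ X i ⁻¹' T i) = (∏ i, μ (U i ⁻¹' S i)) * ∏ i, F (T i) := by
  have hsplit : ⋂ i, U i ⁻¹' S i ∩ X i ⁻¹' T i =
      (fun ω i => U i ω) ⁻¹' Set.univ.pi S ∩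
        (fun ω i => X i ω) ⁻¹' ⋂ i : Fin n, (fun y : ℕ → 𝕏 => y i) ⁻¹' T i := by
    ext
    simp [forall_and]
  rw [hsplit, hUX.measure_inter_preimage_eq_mul _ _ (MeasurableSet.univ_pi hS)
    (MeasurableSet.iInter fun i => measurable_pi_apply _ (hT i))]
  congr 1
  · have hU : (fun ω i => U i ω) ⁻¹' Set.univ.pi S = ⋂ i ∈ univ, U i ⁻¹' S i := by
      ext
      simp
    rw [hU, hUindep.measure_inter_preimage_eq_mul _ fun i _ => hS i]
  · have hX : (fun ω i => X i ω) ⁻¹' ⋂ i : Fin n, (fun y : ℕ → 𝕏 => y i) ⁻¹' T i =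
        ⋂ i ∈ univ, (fun i : Fin n => X i) i ⁻¹' T i := by
      ext
      simp
    rw [hX, (hXindep.precomp Fin.val_injective).measure_inter_preimage_eq_mul _ fun i _ => hT i]
    refine prod_congr rfl fun i _ => ?_
    rw [← hXlaw i, Measure.map_apply (hXmeas i) (hT i)]

theorem integral_sample_eq_piWeightedSum [IsFiniteMeasure μ] (hUmeas : ∀ i, Measurable (U i))
    (hXmeas : ∀ i, Measurable (X i)) (hXindep : iIndepFun X μ) (hXlaw : ∀ i, μ.map (X i) = F)
    (hUindep : iIndepFun U μ) (hUX : IndepFun (fun ω i => U i ω) (fun ω i => X i ω) μ)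
    {A C : Type*} [Fintype A] [Fintype C] {a : α → A} (ha : ∀ x, MeasurableSet (a ⁻¹' {x}))
    {c : 𝕏 → C} (hc : ∀ x, MeasurableSet (c ⁻¹' {x})) (h : (Fin n → A × C) → ℝ) :
    ∫ ω, h (fun i => (a (U i ω), c (X i ω))) ∂μ =
      piWeightedSum (fun i p => μ.real (U i ⁻¹' (a ⁻¹' {p.1})) * F.real (c ⁻¹' {p.2})) h := by
  have hfiber (t : Fin n → A × C) : (fun ω i => (a (U i ω), c (X i ω))) ⁻¹' {t} =
      ⋂ i, U i ⁻¹' (a ⁻¹' {(t i).1}) ∩ X i ⁻¹' (c ⁻¹' {(t i).2}) := by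
    ext
    simp [funext_iff, Prod.ext_iff, forall_and]
  rw [integral_comp_eq_sum_measureReal_preimage fun t => hfiber t ▸
    MeasurableSet.iInter fun i => (hUmeas i (ha _)).inter (hXmeas i (hc _))]
  refine sum_congr rfl fun t _ => ?_
  rw [measureReal_def, hfiber, measure_iInter_preimage_inter_eq_prod hXmeas hXindep hXlaw hUindep
    hUX (fun i => ha _) (fun i => hc _), ENNReal.toReal_mul, ENNReal.toReal_prod,
    ENNReal.toReal_prod, ← prod_mul_distrib]
  rfl

end Sampling

section Cells

variable {𝕏 : Type*} {m : ℕ}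

open Classical in
noncomputable def cellIndex (B : Fin m → Set 𝕏) (x : 𝕏) : Option (Fin m) :=
  if h : ∃ j, x ∈ B j then some h.choose else none

def cellVec (o : Option (Fin m)) : Fin m → ℝ := fun j => if o = some j then 1 else 0

theorem cellVec_nonneg (o : Option (Fin m)) : 0 ≤ cellVec o :=
  fun j => by unfold cellVec; positivity

theorem cellVec_ne_zero_iff {o : Option (Fin m)} {j : Fin m} : cellVec o j ≠ 0 ↔ o = some j := by
  simp [cellVec]

theorem eq_of_cellVec_ne_zero {o : Option (Fin m)} {j j' : Fin m} (hj : cellVec o j ≠ 0)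
    (hj' : cellVec o j' ≠ 0) : j = j' :=
  Option.some_inj.1 ((cellVec_ne_zero_iff.1 hj).symm.trans (cellVec_ne_zero_iff.1 hj'))

variable {B : Fin m → Set 𝕏}

theorem cellIndex_eq_some_iff (hB : Pairwise (Disjoint on B)) {x : 𝕏} {j : Fin m} :
    cellIndex B x = some j ↔ x ∈ B j := by
  unfold cellIndex
  split_ifs with h
  · rw [Option.some_inj]
    exact ⟨fun hj => hj ▸ h.choose_spec,
      fun hx => hB.eq (Set.not_disjoint_iff.2 ⟨x, h.choose_spec, hx⟩)⟩
  · simpa using fun hx => h ⟨j, hx⟩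

theorem cellIndex_eq_none_iff {x : 𝕏} : cellIndex B x = none ↔ ∀ j, x ∉ B j := by
  unfold cellIndex
  split_ifs with h <;> simpa using h

theorem measurableSet_cellIndex_preimage [MeasurableSpace 𝕏] (hBm : ∀ j, MeasurableSet (B j))
    (hB : Pairwise (Disjoint on B)) (o : Option (Fin m)) :
    MeasurableSet (cellIndex B ⁻¹' {o}) := by
  cases o with
  | none =>
    have h : cellIndex B ⁻¹' {none} = ⋂ j, (B j)ᶜ := by
      ext
      simp [cellIndex_eq_none_iff]
    exact h ▸ MeasurableSet.iInter fun j => (hBm j).compl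
  | some j =>
    have h : cellIndex B ⁻¹' {some j} = B j := by
      ext
      simp [cellIndex_eq_some_iff hB]
    exact h ▸ hBm j

theorem indicator_eq_cellVec_cellIndex (hB : Pairwise (Disjoint on B)) (x : 𝕏) (j : Fin m) :
    (B j).indicator (fun _ => (1 : ℝ)) x = cellVec (cellIndex B x) j := by
  by_cases hx : x ∈ B j <;> simp [cellVec, hx, cellIndex_eq_some_iff hB]

theorem sum_range_eq_sum_filter_val_lt {M : Type*} [AddCommMonoid M] {k n : ℕ} (hk : k ≤ n)
    (g : ℕ → M) : ∑ i ∈ range k, g i = ∑ i ∈ univ.filter (fun i : Fin n => ↑i < k), g i := by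
  rw [sum_filter, Fin.sum_univ_eq_sum_range (fun i => if i < k then g i else 0), ← sum_filter]
  congr
  ext
  simp
  omega

end Cells

theorem integral_count_eq_piWeightedSum {Ω : Type*} [MeasurableSpace Ω] {μ : Measure Ω}
    [IsFiniteMeasure μ] {𝕏 : Type*} [MeasurableSpace 𝕏] {F : Measure 𝕏}
    {X : ℕ → Ω → 𝕏} (hXmeas : ∀ i, Measurable (X i)) (hXindep : iIndepFun X μ)
    (hXlaw : ∀ i, μ.map (X i) = F) {n : ℕ} {U : Fin n → Ω → ℕ} (hUmeas : ∀ i, Measurable (U i))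
    (hU01 : ∀ i ω, U i ω ≤ 1) (hUindep : iIndepFun U μ)
    (hUX : IndepFun (fun ω i => U i ω) (fun ω i => X i ω) μ)
    {m : ℕ} {B : Fin m → Set 𝕏} (hBm : ∀ j, MeasurableSet (B j)) (hB : Pairwise (Disjoint on B))
    (h : (Fin m → ℝ) → ℝ) :
    ∫ ω, h (fun j => ∑ i ∈ range (∑ k, U k ω), (B j).indicator (fun _ => (1 : ℝ)) (X i ω)) ∂μ =
      piWeightedSum
        (fun i (p : Bool × Option (Fin m)) =>
          μ.real (U i ⁻¹' ((fun k => decide (k = 1)) ⁻¹' {p.1})) * F.real (cellIndex B ⁻¹' {p.2}))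
        (fun t => h (∑ i, if (t i).1 then cellVec (t i).2 else 0)) := by
  set a : ℕ → Bool := fun k => decide (k = 1)
  set Φ : (Fin n → Bool × Option (Fin m)) → Fin m → ℝ := fun t =>
    ∑ i ∈ univ.filter (fun i : Fin n => ↑i < #(univ.filter fun k => (t k).1)), cellVec (t i).2
  have hcount (ω : Ω) :
      (fun j => ∑ i ∈ range (∑ k, U k ω), (B j).indicator (fun _ => (1 : ℝ)) (X i ω)) =
        Φ fun i => (a (U i ω), cellIndex B (X i ω)) := by
    have hτ : ∑ k, U k ω = #(univ.filter fun k => a (U k ω)) := by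
      rw [card_filter]
      refine sum_congr rfl fun k _ => ?_
      have := hU01 k ω
      by_cases hk : U k ω = 1 <;> simp [a, hk]
      omega
    ext j
    simp only [Φ, hτ, Finset.sum_apply]
    rw [sum_range_eq_sum_filter_val_lt ((card_filter_le _ _).trans_eq (card_fin n))]
    simp [indicator_eq_cellVec_cellIndex hB]
  simp only [hcount]
  rw [integral_sample_eq_piWeightedSum hUmeas hXmeas hXindep hXlaw hUindep hUX
    (fun _ => MeasurableSet.of_discrete) (measurableSet_cellIndex_preimage hBm hB) fun t => h (Φ t),
    piWeightedSum_prod (fun i b => μ.real (U i ⁻¹' (a ⁻¹' {b})))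
      (fun _ o => F.real (cellIndex B ⁻¹' {o})),
    piWeightedSum_prod (fun i b => μ.real (U i ⁻¹' (a ⁻¹' {b})))
      (fun _ o => F.real (cellIndex B ⁻¹' {o}))]
  congr 1
  funext u
  simp only [Φ, ← sum_filter]
  refine piWeightedSum_sum_eq_of_card_eq _ cellVec h ?_
  rw [Fin.card_filter_val_lt, min_eq_right ((card_filter_le _ _).trans_eq (card_fin n))]

/-- for a mixed sampled point process `η = ∑_{i=1}^τ δ_{X_i}` with i.i.d.
samples `X_i` of distribution `F` and `τ = U_1 + ⋯ + U_n` a sum of independent Bernoulli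
variables independent of `(X_i)`, the count vector `(η(B_1), …, η(B_m))` over pairwise
disjoint measurable sets is negatively associated. -/
theorem stmt3 {Ω : Type*} [MeasurableSpace Ω] (μ : Measure Ω) [IsProbabilityMeasure μ]
    {𝕏 : Type*} [MeasurableSpace 𝕏] (F : Measure 𝕏) [IsProbabilityMeasure F]
    (X : ℕ → Ω → 𝕏) (hXmeas : ∀ i, Measurable (X i))
    (hXindep : iIndepFun X μ)
    (hXlaw : ∀ i, Measure.map (X i) μ = F)
    {n : ℕ} (U : Fin n → Ω → ℕ) (hUmeas : ∀ i, Measurable (U i))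
    (hU01 : ∀ i ω, U i ω ≤ 1)
    (hUindep : iIndepFun U μ)
    (hUX : IndepFun (fun ω => fun i => U i ω) (fun ω => fun i => X i ω) μ)
    {m : ℕ} (B : Fin m → Set 𝕏) (hB : ∀ j, MeasurableSet (B j))
    (hBdisj : ∀ j j', j ≠ j' → Disjoint (B j) (B j')) :
    IsNA μ (fun ω j =>
      ∑ i ∈ Finset.range (∑ k, U k ω), (B j).indicator (fun _ => (1 : ℝ)) (X i ω)) := by
  intro A f g _ _ hf hg _ _ hfA hgA
  have hlaw :=
    integral_count_eq_piWeightedSum hXmeas hXindep hXlaw hUmeas hU01 hUindep hUX hB hBdisj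
  rw [hlaw fun x => f x * g x, hlaw f, hlaw g]
  refine piWeightedSum_mul_le (z := fun p : Bool × Option (Fin m) => if p.1 then cellVec p.2 else 0)
    ?_ ?_ ?_ ?_ hf hg hfA hgA
  · rintro ⟨_ | _, o⟩
    exacts [le_rfl, cellVec_nonneg o]
  · rintro ⟨_ | _, o⟩ j j' hj hj'
    exacts [absurd rfl hj, eq_of_cellVec_ne_zero hj hj']
  · exact fun _ _ => mul_nonneg measureReal_nonneg measureReal_nonneg
  · intro i
    have hU1 : ∑ b, μ.real (U i ⁻¹' ((fun k => decide (k = 1)) ⁻¹' {b})) = 1 :=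
      sum_measureReal_preimage_singleton_eq_one (V := (fun k => decide (k = 1)) ∘ U i)
        fun _ => (Measurable.of_discrete.comp (hUmeas i)) (measurableSet_singleton _)
    have hX1 : ∑ o, F.real (cellIndex B ⁻¹' {o}) = 1 :=
      sum_measureReal_preimage_singleton_eq_one (measurableSet_cellIndex_preimage hB hBdisj)
    simp only [Fintype.sum_prod_type, ← sum_mul_sum, hU1, hX1, one_mul]
end

section
/- Let τ = U_1 + ⋯ + U_n be a sum of n independent {0,1}-valued (Bernoulli) random variables with success probabilities p_1,…,p_n ∈ [0,1]. Then the probability mass function (P(τ = k))_{k=0}^n is ultra log-concave of order n, i.e. (P(τ=k)/C(n,k))² ≥ (P(τ=k−1)/C(n,k−1)) · (P(τ=k+1)/C(n,k+1)) for k = 1,…,n−1. -/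
/-!
The law of `τ` arises from the point mass at `0` by successive convolutions with the Bernoulli
laws `(q_i, p_i)`, so it suffices that convolving a nonnegative ULC(`m`) sequence `a` supported
on `{0, …, m}` and without internal zeros with a Bernoulli law gives a ULC(`m + 1`) sequence
without internal zeros. For the normalized sequence `α_j = a_j / C(m, j)` the convolution `c`
satisfies `(m + 1) c_k / C(m + 1, k) = q (m + 1 - k) α_k + p k α_{k-1}`. After expanding, the
ULC inequality for `c` at `k` follows from log-concavity of `α` at `k - 1` and `k`, from
`α_{k-2} α_{k+1} ≤ α_{k-1} α_k` (this is where the absence of internal zeros enters), and from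
`(q α_k - p α_{k-1})² ≥ 0`.
-/

open MeasureTheory ProbabilityTheory

/-- Only the inequalities: the absence of internal zeros is stated separately, as
`(Function.support a).OrdConnected`. -/
def IsULC (n : ℕ) (a : ℕ → ℝ) : Prop :=
  ∀ k, 1 ≤ k → k + 1 ≤ n →
    a (k - 1) / n.choose (k - 1) * (a (k + 1) / n.choose (k + 1)) ≤ (a k / n.choose k) ^ 2

def bernoulliConv (p q : ℝ) (a : ℕ → ℝ) : ℕ → ℝ
  | 0 => q * a 0
  | k + 1 => q * a (k + 1) + p * a k

theorem mul_le_mul_of_sq_le_of_sq_le {A B C D : ℝ} (hB : 0 ≤ B) (hC : 0 ≤ C) (hD : 0 ≤ D)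
    (hAC : A * C ≤ B ^ 2) (hBD : B * D ≤ C ^ 2)
    (hBC : A ≠ 0 → D ≠ 0 → B ≠ 0 ∧ C ≠ 0) : A * D ≤ B * C := by
  by_cases hAD : A = 0 ∨ D = 0
  · rcases hAD with rfl | rfl <;> simp [mul_nonneg hB hC]
  obtain ⟨hA', hD'⟩ := not_or.mp hAD
  obtain ⟨hB', hC'⟩ := hBC hA' hD'
  have hBCpos : 0 < B * C := mul_pos (hB.lt_of_ne' hB') (hC.lt_of_ne' hC')
  refine le_of_mul_le_mul_right ?_ hBCpos
  calc A * D * (B * C) = (A * C) * (B * D) := by ring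
    _ ≤ B ^ 2 * C ^ 2 := mul_le_mul hAC hBD (mul_nonneg hB hD) (sq_nonneg B)
    _ = B * C * (B * C) := by ring

/-- The ULC(`M + 1`) inequality at `K` for a Bernoulli convolution, written in the normalized
terms `A, B, C, D` at `K - 2, …, K + 1` of a ULC(`M`) sequence (see
`bernoulliConv_div_choose_mul`). The difference of the two sides dominates `(q C - p B) ^ 2`. -/
theorem ulc_bernoulliConv_inequality {p q A B C D K M : ℝ} (hp : 0 ≤ p) (hq : 0 ≤ q)
    (hK : 1 ≤ K) (hKM : K ≤ M) (hBD : B * D ≤ C ^ 2) (hAC : 1 < K → A * C ≤ B ^ 2)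
    (hAD : 1 < K → A * D ≤ B * C) :
    (q * B * (M + 1 - (K - 1)) + p * A * (K - 1)) *
        (q * D * (M + 1 - (K + 1)) + p * C * (K + 1)) ≤
      (q * C * (M + 1 - K) + p * B * K) ^ 2 := by
  have hAC' : (K - 1) * (A * C) ≤ (K - 1) * B ^ 2 := by
    rcases hK.eq_or_lt with rfl | hK
    · simp
    · exact mul_le_mul_of_nonneg_left (hAC hK) (by linarith)
  have hAD' : (K - 1) * (A * D) ≤ (K - 1) * (B * C) := by
    rcases hK.eq_or_lt with rfl | hK
    · simp
    · exact mul_le_mul_of_nonneg_left (hAD hK) (by linarith)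
  have h1 := mul_le_mul_of_nonneg_left hBD
    (mul_nonneg (sq_nonneg q) (mul_nonneg (by linarith : 0 ≤ M - K + 2) (sub_nonneg.2 hKM)))
  have h2 := mul_le_mul_of_nonneg_left hAC'
    (mul_nonneg (by linarith : 0 ≤ K + 1) (sq_nonneg p))
  have h3 := mul_le_mul_of_nonneg_left hAD'
    (mul_nonneg (mul_nonneg hp hq) (sub_nonneg.2 hKM))
  nlinarith [sq_nonneg (q * C - p * B)]

section bernoulliConv

variable {p q : ℝ} {a : ℕ → ℝ}

theorem bernoulliConv_succ (k : ℕ) :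
    bernoulliConv p q a (k + 1) = q * a (k + 1) + p * a k := rfl

theorem bernoulliConv_ne_zero_iff (hp : 0 ≤ p) (hq : 0 ≤ q) (ha : ∀ j, 0 ≤ a j) (k : ℕ) :
    bernoulliConv p q a k ≠ 0 ↔ (q ≠ 0 ∧ a k ≠ 0) ∨ (0 < k ∧ p ≠ 0 ∧ a (k - 1) ≠ 0) := by
  cases k with
  | zero => simp [bernoulliConv]
  | succ k =>
    rw [bernoulliConv_succ, Ne, add_eq_zero_iff_of_nonneg (mul_nonneg hq (ha _))
      (mul_nonneg hp (ha k))]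
    simp only [mul_eq_zero, Nat.add_sub_cancel, k.succ_pos, true_and]
    tauto

theorem ordConnected_support_bernoulliConv (hp : 0 ≤ p) (hq : 0 ≤ q) (ha : ∀ j, 0 ≤ a j)
    (hconn : (Function.support a).OrdConnected) :
    (Function.support (bernoulliConv p q a)).OrdConnected := by
  refine ⟨fun x hx z hz y ⟨hxy, hyz⟩ ↦ ?_⟩
  have conn : ∀ {x y z}, x ≤ y → y ≤ z → a x ≠ 0 → a z ≠ 0 → a y ≠ 0 :=
    fun hxy hyz hx hz ↦ hconn.out hx hz ⟨hxy, hyz⟩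
  simp only [Function.mem_support, bernoulliConv_ne_zero_iff hp hq ha] at hx hz ⊢
  rcases hx with ⟨hq0, hx⟩ | ⟨hx0, hp0, hx⟩ <;> rcases hz with ⟨-, hz⟩ | ⟨hz0, hp0', hz⟩
  · exact .inl ⟨hq0, conn hxy hyz hx hz⟩
  · rcases hyz.eq_or_lt with rfl | hyz
    · exact .inr ⟨hz0, hp0', hz⟩
    · exact .inl ⟨hq0, conn hxy (by omega) hx hz⟩
  · exact .inr ⟨by omega, hp0, conn (by omega) (by omega) hx hz⟩
  · exact .inr ⟨by omega, hp0, conn (by omega) (by omega) hx hz⟩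

theorem div_choose_mul_choose {m : ℕ} (ha : ∀ j, m < j → a j = 0) (j : ℕ) :
    a j / m.choose j * m.choose j = a j := by
  rcases le_or_gt j m with hj | hj
  · exact div_mul_cancel₀ _ (Nat.cast_ne_zero.2 (Nat.choose_pos hj).ne')
  · simp [ha j hj]

theorem bernoulliConv_div_choose_mul {m : ℕ} (ha : ∀ j, m < j → a j = 0) {k : ℕ}
    (hk : k ≤ m + 1) :
    bernoulliConv p q a k / (m + 1).choose k * (m + 1) =
      q * (a k / m.choose k) * (m + 1 - k) + p * (a (k - 1) / m.choose (k - 1)) * k := by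
  cases k with
  | zero => simp [bernoulliConv]
  | succ t =>
    have hC : ((m + 1).choose (t + 1) : ℝ) ≠ 0 := Nat.cast_ne_zero.2 (Nat.choose_pos hk).ne'
    have hlow :
        ((m + 1 : ℕ) : ℝ) * m.choose t = (m + 1).choose (t + 1) * ((t + 1 : ℕ) : ℝ) := by
      exact_mod_cast Nat.add_one_mul_choose_eq m t
    have hhigh : (m.choose (t + 1) : ℝ) * ((m + 1 : ℕ) : ℝ) =
        (m + 1).choose (t + 1) * ((m + 1 - (t + 1) : ℕ) : ℝ) := by
      exact_mod_cast Nat.choose_mul_succ_eq m (t + 1)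
    rw [Nat.cast_sub hk] at hhigh
    push_cast at hlow hhigh
    rw [bernoulliConv_succ, Nat.add_sub_cancel, div_mul_eq_mul_div, div_eq_iff hC]
    nth_rewrite 1 [← div_choose_mul_choose ha (t + 1), ← div_choose_mul_choose ha t]
    push_cast
    linear_combination
      q * (a (t + 1) / m.choose (t + 1)) * hhigh + p * (a t / m.choose t) * hlow

theorem isULC_bernoulliConv {m : ℕ} (hp : 0 ≤ p) (hq : 0 ≤ q) (ha0 : ∀ j, 0 ≤ a j)
    (haTop : ∀ j, m < j → a j = 0) (hconn : (Function.support a).OrdConnected)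
    (ha : IsULC m a) :
    IsULC (m + 1) (bernoulliConv p q a) := by
  intro k hk1 hk2
  set α : ℕ → ℝ := fun j ↦ a j / m.choose j with hα
  have hα0 : ∀ j, 0 ≤ α j := fun j ↦ div_nonneg (ha0 j) (Nat.cast_nonneg _)
  have hα_ne : ∀ j, α j ≠ 0 ↔ a j ≠ 0 ∧ j ≤ m := by
    simp [hα, Nat.choose_ne_zero_iff]
  have hBD : α (k - 1) * α (k + 1) ≤ α k ^ 2 := by
    rcases (show k + 1 ≤ m ∨ k = m by omega) with hkm | rfl
    · exact ha k hk1 hkm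
    · simp [hα, haTop (k + 1) (by omega), sq_nonneg]
  have hAC : 1 < k → α (k - 1 - 1) * α k ≤ α (k - 1) ^ 2 := fun hk ↦ by
    simpa [Nat.sub_add_cancel hk1] using ha (k - 1) (by omega) (by omega)
  have hAD : 1 < k → α (k - 1 - 1) * α (k + 1) ≤ α (k - 1) * α k := fun hk ↦
    mul_le_mul_of_sq_le_of_sq_le (hα0 _) (hα0 _) (hα0 _) (hAC hk) hBD fun hA hD ↦ by
      simp only [hα_ne] at hA hD ⊢
      exact ⟨⟨hconn.out hA.1 hD.1 ⟨by omega, by omega⟩, by omega⟩,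
        ⟨hconn.out hA.1 hD.1 ⟨by omega, by omega⟩, by omega⟩⟩
  have key := ulc_bernoulliConv_inequality (K := k) (M := m) hp hq (by exact_mod_cast hk1)
    (by exact_mod_cast (by omega : k ≤ m)) hBD (fun h ↦ hAC (by exact_mod_cast h))
    (fun h ↦ hAD (by exact_mod_cast h))
  have hPrev := bernoulliConv_div_choose_mul (p := p) (q := q) haTop (k := k - 1) (by omega)
  have hCur := bernoulliConv_div_choose_mul (p := p) (q := q) haTop (k := k) (by omega)
  have hNext := bernoulliConv_div_choose_mul (p := p) (q := q) haTop (k := k + 1) (by omega)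
  rw [Nat.cast_sub hk1] at hPrev
  simp only [Nat.add_sub_cancel, Nat.cast_add, Nat.cast_one] at hNext
  set β : ℕ → ℝ := fun j ↦ bernoulliConv p q a j / (m + 1).choose j
  refine le_of_mul_le_mul_right ?_ (by positivity : (0 : ℝ) < (m + 1) ^ 2)
  calc β (k - 1) * β (k + 1) * (m + 1) ^ 2
      = β (k - 1) * (m + 1) * (β (k + 1) * (m + 1)) := by ring
    _ ≤ (β k * (m + 1)) ^ 2 := by
      push_cast at hPrev hCur hNext ⊢
      rw [hPrev, hNext, hCur]
      exact key
    _ = β k ^ 2 * (m + 1) ^ 2 := by ring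

end bernoulliConv

section Probability

variable {Ω : Type*} [MeasurableSpace Ω]

theorem ProbabilityTheory.IndepFun.measureReal_add_eq_bernoulliConv {μ : Measure Ω}
    [IsFiniteMeasure μ] {X Y : Ω → ℕ} (hX : Measurable X) (hY : Measurable Y)
    (hY01 : ∀ ω, Y ω ≤ 1) (hXY : IndepFun X Y μ) (k : ℕ) :
    μ.real {ω | X ω + Y ω = k} =
      bernoulliConv (μ.real {ω | Y ω = 1}) (μ.real {ω | Y ω = 0})
        (fun j ↦ μ.real {ω | X ω = j}) k := by
  have hmul (c d : ℕ) :
      μ.real (X ⁻¹' {c} ∩ Y ⁻¹' {d}) = μ.real {ω | X ω = c} * μ.real {ω | Y ω = d} := by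
    simp only [measureReal_def, ENNReal.toReal_mul, hXY.measure_inter_preimage_eq_mul _ _
      (measurableSet_singleton c) (measurableSet_singleton d)]
    rfl
  cases k with
  | zero =>
    have hset : {ω | X ω + Y ω = 0} = X ⁻¹' {0} ∩ Y ⁻¹' {0} := by ext ω; simp
    rw [hset, hmul, bernoulliConv, mul_comm]
  | succ k =>
    have hset : {ω | X ω + Y ω = k + 1} =
        (X ⁻¹' {k + 1} ∩ Y ⁻¹' {0}) ∪ (X ⁻¹' {k} ∩ Y ⁻¹' {1}) := by
      ext ω
      have := hY01 ω
      simp only [Set.mem_ofPred_eq, Set.mem_union, Set.mem_inter_iff, Set.mem_preimage,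
        Set.mem_singleton_iff]
      omega
    have hdisj : Disjoint (X ⁻¹' {k + 1} ∩ Y ⁻¹' {0}) (X ⁻¹' {k} ∩ Y ⁻¹' {1}) :=
      Set.disjoint_left.2 fun ω h h' ↦ by simp_all
    rw [hset, measureReal_union hdisj ((hX (measurableSet_singleton k)).inter
      (hY (measurableSet_singleton 1))), hmul, hmul, bernoulliConv_succ]
    ring

section PartialSums

variable {ι : Type*} (μ : Measure Ω) (U : ι → Ω → ℕ)

def partialSumMass (s : Finset ι) (k : ℕ) : ℝ := μ.real {ω | ∑ i ∈ s, U i ω = k}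

variable {μ U}

theorem partialSumMass_eq_zero_of_card_lt (hU01 : ∀ i ω, U i ω ≤ 1) {s : Finset ι} {k : ℕ}
    (hk : s.card < k) : partialSumMass μ U s k = 0 := by
  suffices {ω | ∑ i ∈ s, U i ω = k} = ∅ by simp [partialSumMass, this]
  refine Set.eq_empty_of_forall_notMem fun ω hω ↦ ?_
  have : ∑ i ∈ s, U i ω ≤ s.card := by
    simpa using Finset.sum_le_sum fun i (_ : i ∈ s) ↦ hU01 i ω
  simp only [Set.mem_ofPred_eq] at hω
  omega

variable [IsFiniteMeasure μ]

theorem partialSumMass_insert [DecidableEq ι] (hUmeas : ∀ i, Measurable (U i))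
    (hU01 : ∀ i ω, U i ω ≤ 1) (hUindep : iIndepFun U μ) {s : Finset ι} {a : ι} (ha : a ∉ s) :
    partialSumMass μ U (insert a s) =
      bernoulliConv (μ.real {ω | U a ω = 1}) (μ.real {ω | U a ω = 0})
        (partialSumMass μ U s) := by
  have hindep : IndepFun (fun ω ↦ ∑ i ∈ s, U i ω) (U a) μ := by
    simpa only [← Finset.sum_apply] using hUindep.indepFun_finsetSum_of_notMem hUmeas ha
  ext k
  simp only [partialSumMass, Finset.sum_insert ha, add_comm (U a _)]
  exact hindep.measureReal_add_eq_bernoulliConv (Finset.measurable_sum s fun i _ ↦ hUmeas i)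
    (hUmeas a) (hU01 a) k

theorem isULC_partialSumMass (hUmeas : ∀ i, Measurable (U i)) (hU01 : ∀ i ω, U i ω ≤ 1)
    (hUindep : iIndepFun U μ) (s : Finset ι) :
    (Function.support (partialSumMass μ U s)).OrdConnected ∧
      IsULC s.card (partialSumMass μ U s) := by
  classical
  induction s using Finset.induction_on with
  | empty =>
    refine ⟨?_, fun k hk1 hk2 ↦ by simp at hk2⟩
    have hsupp : Function.support (partialSumMass μ U ∅) ⊆ {0} := fun k hk ↦
      by_contra fun h0 ↦ hk (partialSumMass_eq_zero_of_card_lt hU01 (Nat.pos_of_ne_zero h0))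
    rcases Set.subset_singleton_iff_eq.1 hsupp with h | h <;> rw [h]
    exacts [Set.ordConnected_empty, Set.ordConnected_singleton]
  | insert a s ha ih =>
    have hnonneg : ∀ k, 0 ≤ partialSumMass μ U s k := fun _ ↦ measureReal_nonneg
    rw [partialSumMass_insert hUmeas hU01 hUindep ha, Finset.card_insert_of_notMem ha]
    exact ⟨ordConnected_support_bernoulliConv measureReal_nonneg measureReal_nonneg hnonneg
        ih.1,
      isULC_bernoulliConv measureReal_nonneg measureReal_nonneg hnonneg
        (fun _ ↦ partialSumMass_eq_zero_of_card_lt hU01) ih.1 ih.2⟩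

end PartialSums

end Probability

/-- if `τ = U_1 + ⋯ + U_n` is a sum of `n` independent `{0,1}`-valued
(Bernoulli) random variables, then the probability mass function of `τ` is ultra
log-concave of order `n`: `(P(τ=k)/C(n,k))² ≥ (P(τ=k-1)/C(n,k-1))·(P(τ=k+1)/C(n,k+1))`
for `k = 1, …, n-1`. -/
theorem stmt7 {Ω : Type*} [MeasurableSpace Ω] (μ : Measure Ω) [IsProbabilityMeasure μ]
    {n : ℕ} (U : Fin n → Ω → ℕ) (hUmeas : ∀ i, Measurable (U i))
    (hU01 : ∀ i ω, U i ω ≤ 1)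
    (hUindep : iIndepFun U μ) :
    ∀ k : ℕ, 1 ≤ k → k + 1 ≤ n →
      ((μ {ω | (∑ i, U i ω) = k - 1}).toReal / (n.choose (k - 1))) *
        ((μ {ω | (∑ i, U i ω) = k + 1}).toReal / (n.choose (k + 1))) ≤
      ((μ {ω | (∑ i, U i ω) = k}).toReal / (n.choose k)) ^ 2 := by
  have hULC := (isULC_partialSumMass hUmeas hU01 hUindep Finset.univ).2
  rw [Finset.card_univ, Fintype.card_fin] at hULC
  intro k hk1 hk2
  simpa [partialSumMass, measureReal_def] using hULC k hk1 hk2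
end

section
/- Let Z = (Z^1,…,Z^m) be a random vector with components in [0,∞) such that almost surely at most one of the components is positive, i.e. Σ_{j=1}^m 1{Z^j > 0} ≤ 1. Then Z is negatively associated (NA). -/
open MeasureTheory ProbabilityTheory

/-- a random vector with nonnegative components such that almost surely
at most one component is positive is negatively associated. -/
theorem stmt9 {Ω : Type*} [MeasurableSpace Ω] (μ : Measure Ω) [IsProbabilityMeasure μ]
    {m : ℕ} (Z : Ω → Fin m → ℝ) (hZ : Measurable Z)
    (hpos : ∀ᵐ ω ∂μ, (∀ j, 0 ≤ Z ω j) ∧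
      (Finset.univ.filter (fun j => 0 < Z ω j)).card ≤ 1) :
    IsNA μ Z := by
  intro A f g hfm hgm hfmono hgmono hfb hgb hfdep hgdep
  obtain ⟨Cf, hCf⟩ := hfb
  obtain ⟨Cg, hCg⟩ := hgb
  set f0 := f (fun _ => (0 : ℝ)) with hf0
  set g0 := g (fun _ => (0 : ℝ)) with hg0
  have hfint : Integrable (fun ω => f (Z ω)) μ :=
    ⟨(hfm.comp hZ).aestronglyMeasurable,
      HasFiniteIntegral.of_bounded (C := Cf) (Filter.Eventually.of_forall fun ω => hCf _)⟩
  have hgint : Integrable (fun ω => g (Z ω)) μ :=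
    ⟨(hgm.comp hZ).aestronglyMeasurable,
      HasFiniteIntegral.of_bounded (C := Cg) (Filter.Eventually.of_forall fun ω => hCg _)⟩
  have hCg0 : 0 ≤ Cg := le_trans (abs_nonneg _) (hCg (fun _ => 0))
  have hfgint : Integrable (fun ω => f (Z ω) * g (Z ω)) μ := by
    refine ⟨((hfm.comp hZ).mul (hgm.comp hZ)).aestronglyMeasurable,
      HasFiniteIntegral.of_bounded (C := Cf * Cg) (Filter.Eventually.of_forall fun ω => ?_)⟩
    calc |f (Z ω) * g (Z ω)| = |f (Z ω)| * |g (Z ω)| := abs_mul _ _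
    _ ≤ Cf * Cg := mul_le_mul (hCf _) (hCg _) (abs_nonneg _)
        (le_trans (abs_nonneg (f (Z ω))) (hCf (Z ω)))
  -- key a.e. facts
  have key : ∀ᵐ ω ∂μ, (f (Z ω) - f0) * (g (Z ω) - g0) = 0 ∧
      f0 ≤ f (Z ω) ∧ g0 ≤ g (Z ω) := by
    filter_upwards [hpos] with ω ⟨hnn, hcard⟩
    have hle : (fun _ => (0 : ℝ)) ≤ Z ω := fun j => hnn j
    refine ⟨?_, hfmono hle, hgmono hle⟩
    by_cases h : ∃ j ∈ A, 0 < Z ω j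
    · obtain ⟨j₀, hj₀A, hj₀⟩ := h
      have hg' : g (Z ω) = g0 := by
        apply hgdep
        intro i hi
        by_contra hne
        have hi' : 0 < Z ω i := lt_of_le_of_ne (hnn i) (Ne.symm hne)
        have hij : i ≠ j₀ := fun e => hi (e ▸ hj₀A)
        have hsub : ({i, j₀} : Finset (Fin m)) ⊆
            Finset.univ.filter (fun j => 0 < Z ω j) := by
          intro x hx
          simp only [Finset.mem_insert, Finset.mem_singleton] at hx
          rcases hx with rfl | rfl <;> simp [hi', hj₀]
        have h2 : ({i, j₀} : Finset (Fin m)).card = 2 := Finset.card_pair hij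
        have := Finset.card_le_card hsub
        omega
      rw [hg']; ring
    · push_neg at h
      have hf' : f (Z ω) = f0 := by
        apply hfdep
        intro i hi
        exact le_antisymm (h i hi) (hnn i)
      rw [hf']; ring
  have key1 : ∀ᵐ ω ∂μ, f (Z ω) * g (Z ω) =
      f (Z ω) * g0 + f0 * g (Z ω) - f0 * g0 := by
    filter_upwards [key] with ω ⟨h1, _, _⟩
    nlinarith [h1]
  have hconst : ∀ c : ℝ, ∫ _ : Ω, c ∂μ = c := by
    intro c; simp
  have hFf0 : f0 ≤ ∫ ω, f (Z ω) ∂μ := by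
    rw [← hconst f0]
    exact integral_mono_ae (integrable_const _) hfint (key.mono fun ω h => h.2.1)
  have hGg0 : g0 ≤ ∫ ω, g (Z ω) ∂μ := by
    rw [← hconst g0]
    exact integral_mono_ae (integrable_const _) hgint (key.mono fun ω h => h.2.2)
  have heq : ∫ ω, f (Z ω) * g (Z ω) ∂μ =
      (∫ ω, f (Z ω) ∂μ) * g0 + f0 * (∫ ω, g (Z ω) ∂μ) - f0 * g0 := by
    rw [integral_congr_ae key1]
    have h1 : Integrable (fun ω => f (Z ω) * g0) μ := hfint.mul_const g0
    have h2 : Integrable (fun ω => f0 * g (Z ω)) μ := hgint.const_mul f0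
    have h3 : Integrable (fun ω => f (Z ω) * g0 + f0 * g (Z ω)) μ := h1.add h2
    rw [integral_sub h3 (integrable_const _), integral_add h1 h2,
      integral_mul_const, integral_const_mul, hconst]
  rw [heq]
  nlinarith [mul_nonneg (sub_nonneg.mpr hFf0) (sub_nonneg.mpr hGg0)]
end

section
/- Let N = (N_1,…,N_n) be an sNA random vector with nonnegative components such that each N_i and the product N_1⋯N_n are integrable. Then E(N_1 ⋯ N_n) ≤ E(N_1) ⋯ E(N_n). In particular, for a point process η whose count vectors (η(B_1),…,η(B_n)) over pairwise disjoint bounded Borel sets B_1,…,B_n ⊆ ℝ^d are sNA, the moment measures satisfy E(η(B_1)⋯η(B_n)) ≤ E(η(B_1))⋯E(η(B_n)). -/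
open MeasureTheory ProbabilityTheory

/-- A random vector `X = (X_1, …, X_n)` is negatively associated in sequence (sNA):
for every `i = 1, …, n-1`, every `t ∈ ℝ` and every bounded measurable `f` nondecreasing in
each coordinate (and depending only on the coordinates after `i`),
`Cov(1{X_i > t}, f(X_{i+1}, …, X_n)) ≤ 0`. -/
def SNA {Ω : Type*} [MeasurableSpace Ω] (μ : Measure Ω) {n : ℕ}
    (X : Ω → Fin n → ℝ) : Prop :=
  ∀ (i : Fin n) (t : ℝ) (f : (Fin n → ℝ) → ℝ), (i : ℕ) + 1 < n →
    Measurable f → Monotone f → IsBdd f → DepOn f {j | i < j} →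
    ∫ ω, (if t < X ω i then (1 : ℝ) else 0) * f (X ω) ∂μ ≤
      (μ {ω | t < X ω i}).toReal * ∫ ω, f (X ω) ∂μ

/-!
Peel off the first coordinate. For `0 ≤ Z ≤ M` the layer-cake formula
`Z = ∫₀^M 1{t < Z} dt` turns the sNA covariance bounds `Cov(1{N₁ > t}, f(N₂, …, Nₙ)) ≤ 0`,
integrated over `t`, into `E[N₁ · N₂ ⋯ Nₙ] ≤ E[N₁] · E[N₂ ⋯ Nₙ]`, and induction on `n` finishes
the bounded case. Truncating at level `k` preserves sNA, and Fatou's lemma lets `k → ∞`.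
-/

open Set Filter Topology

lemma abs_prod_le_pow {ι : Type*} {s : Finset ι} {x : ι → ℝ} {M : ℝ} (h0 : ∀ i ∈ s, 0 ≤ x i)
    (hM : ∀ i ∈ s, x i ≤ M) : |∏ i ∈ s, x i| ≤ M ^ s.card := by
  rw [abs_of_nonneg (Finset.prod_nonneg h0), ← Finset.prod_const]
  exact Finset.prod_le_prod h0 hM

lemma tendsto_min_natCast_atTop (x : ℝ) : Tendsto (fun k : ℕ => min x k) atTop (𝓝 x) :=
  tendsto_const_nhds.congr' <|
    (tendsto_natCast_atTop_atTop.eventually_ge_atTop x).mono fun _ hk => (min_eq_left hk).symm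

lemma integral_le_of_tendsto_of_nonneg {α : Type*} [MeasurableSpace α] {μ : Measure α}
    {F : ℕ → α → ℝ} {G : α → ℝ} {c : ℝ} (hF : ∀ k, Integrable (F k) μ)
    (hF0 : ∀ k, 0 ≤ᵐ[μ] F k) (hlim : ∀ᵐ x ∂μ, Tendsto (fun k => F k x) atTop (𝓝 (G x)))
    (hc : ∀ k, ∫ x, F k x ∂μ ≤ c) :
    ∫ x, G x ∂μ ≤ c := by
  have hc0 : 0 ≤ c := (integral_nonneg_of_ae (hF0 0)).trans (hc 0)
  have hG0 : 0 ≤ᵐ[μ] G := by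
    filter_upwards [hlim, ae_all_iff.2 hF0] with x hx hx0 using ge_of_tendsto' hx hx0
  rw [integral_eq_lintegral_of_nonneg_ae hG0
    (aestronglyMeasurable_of_tendsto_ae _ (fun k => (hF k).1) hlim)]
  refine ENNReal.toReal_le_of_le_ofReal hc0 ?_
  calc ∫⁻ x, ENNReal.ofReal (G x) ∂μ
      = ∫⁻ x, liminf (fun k => ENNReal.ofReal (F k x)) atTop ∂μ :=
        lintegral_congr_ae <| by
          filter_upwards [hlim] with x hx
          exact ((ENNReal.continuous_ofReal.tendsto _).comp hx).liminf_eq.symm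
    _ ≤ liminf (fun k => ∫⁻ x, ENNReal.ofReal (F k x) ∂μ) atTop :=
        lintegral_liminf_le' fun k => (hF k).1.aemeasurable.ennreal_ofReal
    _ ≤ ENNReal.ofReal c := liminf_le_of_frequently_le' <| Frequently.of_forall fun k => by
        rw [← ofReal_integral_eq_lintegral_ofReal (hF k) (hF0 k)]
        exact ENNReal.ofReal_le_ofReal (hc k)

section BoundedIntegrands

variable {Ω : Type*} [MeasurableSpace Ω] {μ : Measure Ω} {M : ℝ} {Z h : Ω → ℝ}

lemma setIntegral_Ioc_ite_lt {z : ℝ} (hz0 : 0 ≤ z) (hzM : z ≤ M) :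
    ∫ t in Ioc 0 M, (if t < z then (1 : ℝ) else 0) = z := by
  have hind : (fun t : ℝ => if t < z then (1 : ℝ) else 0) = (Iio z).indicator 1 := by
    ext t; simp [indicator_apply]
  have hIoo : Iio z ∩ Ioc 0 M = Ioo 0 z := by
    ext t; simp only [mem_inter_iff, mem_Iio, mem_Ioc, mem_Ioo]; grind
  rw [hind, integral_indicator_one measurableSet_Iio,
    measureReal_restrict_apply measurableSet_Iio, hIoo]
  simp [hz0]

lemma integrable_prod_of_nonneg_of_le [IsFiniteMeasure μ] {ι : Type*} [Fintype ι]
    {X : Ω → ι → ℝ} (hX : Measurable X) (h0 : ∀ ω i, 0 ≤ X ω i) (hM : ∀ ω i, X ω i ≤ M) :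
    Integrable (fun ω => ∏ i, X ω i) μ := by
  have hmeas : Measurable fun ω => ∏ i, X ω i :=
    Finset.measurable_prod _ fun i _ => (measurable_pi_apply i).comp hX
  refine Integrable.of_bound hmeas.aestronglyMeasurable (M ^ Fintype.card ι)
    (ae_of_all _ fun ω => ?_)
  simpa only [Real.norm_eq_abs, Finset.card_univ] using
    abs_prod_le_pow (s := Finset.univ) (fun i _ => h0 ω i) fun i _ => hM ω i

lemma integrable_ite_lt_mul [IsFiniteMeasure μ] (hZ : Measurable Z) (hh : Measurable h)
    (hbdd : IsBdd h) :
    Integrable (Function.uncurry fun t ω => (if t < Z ω then (1 : ℝ) else 0) * h ω)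
      ((volume.restrict (Ioc 0 M)).prod μ) := by
  obtain ⟨C, hC⟩ := hbdd
  have hmeas : Measurable (Function.uncurry fun t ω => (if t < Z ω then (1 : ℝ) else 0) * h ω) :=
    (Measurable.ite (measurableSet_lt measurable_fst (hZ.comp measurable_snd))
      measurable_const measurable_const).mul (hh.comp measurable_snd)
  refine Integrable.of_bound hmeas.aestronglyMeasurable C (ae_of_all _ fun p => ?_)
  simp only [Function.uncurry, Real.norm_eq_abs, abs_mul]
  split_ifs <;> simp [hC p.2, (abs_nonneg _).trans (hC p.2)]

lemma integral_mul_eq_setIntegral_Ioc [IsFiniteMeasure μ] (hZ : Measurable Z)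
    (hZ0 : ∀ ω, 0 ≤ Z ω) (hZM : ∀ ω, Z ω ≤ M) (hh : Measurable h) (hbdd : IsBdd h) :
    ∫ ω, Z ω * h ω ∂μ = ∫ t in Ioc 0 M, ∫ ω, (if t < Z ω then (1 : ℝ) else 0) * h ω ∂μ := by
  rw [integral_integral_swap (integrable_ite_lt_mul hZ hh hbdd)]
  refine integral_congr_ae (ae_of_all _ fun ω => ?_)
  simp only [integral_mul_const, setIntegral_Ioc_ite_lt (hZ0 ω) (hZM ω)]

theorem integral_mul_le_of_forall_cov_nonpos [IsFiniteMeasure μ] (hZ : Measurable Z)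
    (hZ0 : ∀ ω, 0 ≤ Z ω) (hZM : ∀ ω, Z ω ≤ M) (hh : Measurable h) (hbdd : IsBdd h)
    (hcov : ∀ t : ℝ, ∫ ω, (if t < Z ω then (1 : ℝ) else 0) * h ω ∂μ ≤
      (μ {ω | t < Z ω}).toReal * ∫ ω, h ω ∂μ) :
    ∫ ω, Z ω * h ω ∂μ ≤ (∫ ω, Z ω ∂μ) * ∫ ω, h ω ∂μ := by
  set c := ∫ ω, h ω ∂μ
  have hc : IsBdd fun _ : Ω => c := ⟨|c|, fun _ => le_rfl⟩
  calc ∫ ω, Z ω * h ω ∂μ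
      = ∫ t in Ioc 0 M, ∫ ω, (if t < Z ω then (1 : ℝ) else 0) * h ω ∂μ :=
        integral_mul_eq_setIntegral_Ioc hZ hZ0 hZM hh hbdd
    _ ≤ ∫ t in Ioc 0 M, ∫ ω, (if t < Z ω then (1 : ℝ) else 0) * c ∂μ := by
        refine integral_mono (integrable_ite_lt_mul hZ hh hbdd).integral_prod_left
          (integrable_ite_lt_mul hZ measurable_const hc).integral_prod_left fun t => ?_
        have hind : (fun ω => if t < Z ω then (1 : ℝ) else 0) = {ω | t < Z ω}.indicator 1 := by
          ext ω; simp [indicator_apply]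
        simpa only [integral_mul_const, hind,
          integral_indicator_one (measurableSet_lt measurable_const hZ), measureReal_def] using hcov t
    _ = ∫ ω, Z ω * c ∂μ := (integral_mul_eq_setIntegral_Ioc hZ hZ0 hZM measurable_const hc).symm
    _ = (∫ ω, Z ω ∂μ) * c := integral_mul_const _ _

end BoundedIntegrands

section ClampedTailProd

variable {n : ℕ} {M : ℝ}

/-- Clamping to `[0, M]` makes the product of the coordinates after the first bounded and
monotone on all of `ℝⁿ⁺¹`, without changing it on `[0, M]`-valued vectors. -/
def clampedTailProd (M : ℝ) (x : Fin (n + 1) → ℝ) : ℝ :=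
  ∏ j : Fin n, max 0 (min (x j.succ) M)

lemma measurable_clampedTailProd : Measurable (clampedTailProd (n := n) M) :=
  Finset.measurable_prod _ fun _ _ =>
    measurable_const.max ((measurable_pi_apply _).min measurable_const)

lemma monotone_clampedTailProd : Monotone (clampedTailProd (n := n) M) := fun _ _ hxy =>
  Finset.prod_le_prod (fun _ _ => le_max_left _ _) fun j _ =>
    max_le_max le_rfl (min_le_min (hxy j.succ) le_rfl)

lemma isBdd_clampedTailProd : IsBdd (clampedTailProd (n := n) M) := by
  refine ⟨max 0 M ^ n, fun x => ?_⟩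
  rw [clampedTailProd]
  simpa only [Finset.card_univ, Fintype.card_fin] using
    abs_prod_le_pow (s := (Finset.univ : Finset (Fin n))) (fun _ _ => le_max_left _ _) fun _ _ =>
      max_le_max le_rfl (min_le_right _ _)

lemma depOn_clampedTailProd : DepOn (clampedTailProd (n := n) M) {j | 0 < j} := fun _ _ hxy =>
  Finset.prod_congr rfl fun j _ => by rw [hxy j.succ (Fin.succ_pos j)]

lemma clampedTailProd_eq {x : Fin (n + 1) → ℝ} (hx0 : ∀ j, 0 ≤ x j) (hxM : ∀ j, x j ≤ M) :
    clampedTailProd M x = ∏ j : Fin n, x j.succ :=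
  Finset.prod_congr rfl fun j _ => by rw [min_eq_left (hxM _), max_eq_right (hx0 _)]

end ClampedTailProd

namespace SNA

variable {Ω : Type*} [MeasurableSpace Ω] {μ : Measure Ω} {n : ℕ}

lemma tail {N : Ω → Fin (n + 1) → ℝ} (hsna : SNA μ N) : SNA μ fun ω => Fin.tail (N ω) :=
  fun i t f hi hf hmono hbdd hdep =>
    hsna i.succ t (f ∘ Fin.tail) (by simpa using hi)
      (hf.comp (measurable_pi_lambda _ fun j => measurable_pi_apply j.succ))
      (fun _ _ hxy => hmono fun j => hxy j.succ) (hbdd.imp fun _ hC _ => hC _)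
      fun x y hxy => hdep _ _ fun j hj => hxy j.succ (Fin.succ_lt_succ_iff.mpr hj)

lemma min_const {N : Ω → Fin n → ℝ} (hsna : SNA μ N) (M : ℝ) :
    SNA μ fun ω j => min (N ω j) M := by
  intro i t f hi hf hmono hbdd hdep
  by_cases htM : t < M
  · have hlt : ∀ ω, t < min (N ω i) M ↔ t < N ω i := fun ω => by simp [htM]
    simp only [hlt]
    exact hsna i t (fun x => f fun j => min (x j) M) hi
      (hf.comp (measurable_pi_lambda _ fun j => (measurable_pi_apply j).min measurable_const))
      (fun _ _ hxy => hmono fun j => min_le_min (hxy j) le_rfl) (hbdd.imp fun _ hC _ => hC _)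
      fun x y hxy => hdep _ _ fun j hj => by rw [hxy j hj]
  · have hlt : ∀ ω, ¬ t < min (N ω i) M := fun ω h => htM (h.trans_le (min_le_right _ _))
    simp [hlt]

theorem integral_prod_le_prod_integral_of_le [IsProbabilityMeasure μ] {M : ℝ}
    {N : Ω → Fin n → ℝ} (hsna : SNA μ N) (hN : Measurable N) (h0 : ∀ ω i, 0 ≤ N ω i)
    (hM : ∀ ω i, N ω i ≤ M) :
    ∫ ω, ∏ i, N ω i ∂μ ≤ ∏ i, ∫ ω, N ω i ∂μ := by
  induction n with
  | zero => simp
  | succ n ih =>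
    rcases n.eq_zero_or_pos with rfl | hn
    · simp
    set f := clampedTailProd (n := n) M
    have hfN : ∀ ω, f (N ω) = ∏ j : Fin n, N ω j.succ := fun ω =>
      clampedTailProd_eq (h0 ω) (hM ω)
    have hcov := fun t => hsna 0 t f (by simpa using hn) measurable_clampedTailProd
      monotone_clampedTailProd isBdd_clampedTailProd depOn_clampedTailProd
    have htail := ih hsna.tail (measurable_pi_lambda _ fun j => (measurable_pi_apply j.succ).comp hN)
      (fun ω j => h0 ω j.succ) (fun ω j => hM ω j.succ)
    calc ∫ ω, ∏ i, N ω i ∂μ = ∫ ω, N ω 0 * f (N ω) ∂μ := by simp only [Fin.prod_univ_succ, hfN]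
      _ ≤ (∫ ω, N ω 0 ∂μ) * ∫ ω, f (N ω) ∂μ :=
        integral_mul_le_of_forall_cov_nonpos ((measurable_pi_apply 0).comp hN) (h0 · 0) (hM · 0)
          (measurable_clampedTailProd.comp hN) (isBdd_clampedTailProd.imp fun _ hC ω => hC (N ω))
          hcov
      _ ≤ (∫ ω, N ω 0 ∂μ) * ∏ j : Fin n, ∫ ω, N ω j.succ ∂μ := by
        simp only [hfN]
        exact mul_le_mul_of_nonneg_left htail (integral_nonneg (h0 · 0))
      _ = ∏ i, ∫ ω, N ω i ∂μ := (Fin.prod_univ_succ fun i => ∫ ω, N ω i ∂μ).symm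

end SNA

theorem stmt14_general {Ω : Type*} [MeasurableSpace Ω] (μ : Measure Ω) [IsProbabilityMeasure μ]
    {n : ℕ} (N : Ω → Fin n → ℝ) (hN : Measurable N)
    (hnonneg : ∀ ω i, 0 ≤ N ω i)
    (hsna : SNA μ N)
    (hint : ∀ i, Integrable (fun ω => N ω i) μ) :
    ∫ ω, ∏ i, N ω i ∂μ ≤ ∏ i, ∫ ω, N ω i ∂μ := by
  set Y : ℕ → Ω → Fin n → ℝ := fun k ω j => min (N ω j) k
  have hY0 : ∀ k ω j, 0 ≤ Y k ω j := fun k ω j => le_min (hnonneg ω j) k.cast_nonneg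
  have hYk : ∀ k ω j, Y k ω j ≤ k := fun _ _ _ => min_le_right _ _
  have hYmeas : ∀ k, Measurable (Y k) := fun _ =>
    measurable_pi_lambda _ fun j => ((measurable_pi_apply j).comp hN).min measurable_const
  refine integral_le_of_tendsto_of_nonneg
    (fun k => integrable_prod_of_nonneg_of_le (hYmeas k) (hY0 k) (hYk k))
    (fun k => ae_of_all _ fun ω => Finset.prod_nonneg fun j _ => hY0 k ω j)
    (ae_of_all _ fun ω => tendsto_finsetProd _ fun j _ => tendsto_min_natCast_atTop (N ω j))
    fun k => ?_
  calc ∫ ω, ∏ j, Y k ω j ∂μ ≤ ∏ j, ∫ ω, Y k ω j ∂μ :=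
        (hsna.min_const k).integral_prod_le_prod_integral_of_le (hYmeas k) (hY0 k) (hYk k)
    _ ≤ ∏ j, ∫ ω, N ω j ∂μ :=
        Finset.prod_le_prod (fun j _ => integral_nonneg (hY0 k · j)) fun j _ =>
          integral_mono_of_nonneg (ae_of_all _ (hY0 k · j)) (hint j)
            (ae_of_all _ fun _ => min_le_left _ _)

/-- if `N = (N_1, …, N_n)` is an sNA random vector with nonnegative
components such that each `N_i` and the product `N_1 ⋯ N_n` are integrable, then
`E(N_1 ⋯ N_n) ≤ E(N_1) ⋯ E(N_n)` (in particular this yields the comparison of the moment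
measures of a point process whose count vectors over disjoint bounded Borel sets are
sNA with the product of the intensity measures). -/
theorem stmt14 {Ω : Type*} [MeasurableSpace Ω] (μ : Measure Ω) [IsProbabilityMeasure μ]
    {n : ℕ} (N : Ω → Fin n → ℝ) (hN : Measurable N)
    (hnonneg : ∀ ω i, 0 ≤ N ω i)
    (hsna : SNA μ N)
    (hint : ∀ i, Integrable (fun ω => N ω i) μ)
    (hprod : Integrable (fun ω => ∏ i, N ω i) μ) :
    ∫ ω, ∏ i, N ω i ∂μ ≤ ∏ i, ∫ ω, N ω i ∂μ :=
  stmt14_general μ N hN hnonneg hsna hint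
end
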